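/- For α > 0 and n ≥ 0, the normalized Jacobi polynomial P̃_n^{(α,α)} (normalized so that ∫_{-1}^1 P̃_n^{(α,α)}(x)² (1-x²)^α dx = 1) satisfies α ∫_{-1}^1 P̃_n^{(α,α)}(x)² (1-x²)^{α-1} dx = n + α + 1/2. -/

import Mathlib

open Real MeasureTheory

/-- The Jacobi polynomial `P_n^{(α,α)}`, defined through the three-term recurrence
`P_{k+1}(x) = A_k x P_k(x) - C_k P_{k-1}(x)` (the middle coefficient `B_k` vanishes
when `β = α`). -/
noncomputable def jacobiP (α : ℝ) : ℕ → ℝ → ℝ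
  | 0, _ => 1
  | 1, x => (α + 1) * x
  | (n + 2), x =>
      ((2 * ((n : ℝ) + 1) + 2 * α + 1) * (2 * ((n : ℝ) + 1) + 2 * α + 2) /
          (2 * ((n : ℝ) + 2) * (((n : ℝ) + 1) + 2 * α + 1)) * x) * jacobiP α (n + 1) x -
        (((n : ℝ) + 1 + α) ^ 2 * (2 * ((n : ℝ) + 1) + 2 * α + 2) /
          (((n : ℝ) + 2) * (((n : ℝ) + 1) + 2 * α + 1) * (2 * ((n : ℝ) + 1) + 2 * α))) *
          jacobiP α n x

/-- The squared weighted `L²` norm `h_n^{(α,α)}` of the Jacobi polynomial `P_n^{(α,α)}`. -/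
noncomputable def jacobiH (α : ℝ) (n : ℕ) : ℝ :=
  (2 : ℝ) ^ (2 * α + 1) * Real.Gamma (n + α + 1) ^ 2 /
    (n.factorial * (2 * n + 2 * α + 1) * Real.Gamma (n + 2 * α + 1))

/-- The normalized Jacobi polynomial `P̃_n^{(α,α)}`, with unit norm in
`L²([-1,1], (1-x²)^α dx)`. -/
noncomputable def normJacobiP (α : ℝ) (n : ℕ) (x : ℝ) : ℝ :=
  jacobiP α n x / Real.sqrt (jacobiH α n)

/-!
With `p = P_{n+1}^{(α,α)}` and `q = P_n^{(α+1,α+1)}` one has the raising identity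
`p' = (n + 2α + 2)/2 · q` and the lowering identity
`((1-x²)^{α+1} q)' = -2(n+1) (1-x²)^α p`. Integrating by parts with them gives
`4(n+1) α ∫ p² (1-x²)^{α-1} = (n + 2α + 2)(α + 1) ∫ q² (1-x²)^α`, and `h_n` obeys the same
ratio, so the unnormalised identity `α ∫ P_n² (1-x²)^{α-1} = (n + α + 1/2) h_n` passes from
`(n, α + 1)` to `(n + 1, α)`; for `n = 0` both sides are Beta integrals. The raising and
lowering identities follow from the three-term recurrence through the connection formula
expressing `P^{(α,α)}` by `P^{(α+1,α+1)}` and the formula for `(1-x²) P^{(α+1,α+1)}_n`.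
-/

theorem mul_eq_add_of_three_term_recurrences {X Y A C A' C' a b : ℕ → ℝ} {x s : ℝ}
    (hX : ∀ n, X (n + 2) = A n * (x * X (n + 1)) - C n * X n)
    (hY : ∀ n, Y (n + 2) = A' n * (x * Y (n + 1)) - C' n * Y n) (hA' : ∀ n, A' n ≠ 0)
    (ha : ∀ n, A n * a (n + 1) = a (n + 2) * A' (n + 2))
    (hab : ∀ n, A n * b (n + 1) / A' n - C n * a n = b (n + 2) - a (n + 2) * C' (n + 2))
    (hb : ∀ n, A n * b (n + 1) * C' n / A' n = C n * b n)
    (h₀ : s * X 0 = a 0 * Y 2 + b 0 * Y 0) (h₁ : s * X 1 = a 1 * Y 3 + b 1 * Y 1) (n : ℕ) :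
    s * X n = a n * Y (n + 2) + b n * Y n := by
  induction n using Nat.twoStepInduction with
  | zero => exact h₀
  | one => exact h₁
  | more n ih₀ ih₁ =>
    have hxY : x * Y (n + 1) = (Y (n + 2) + C' n * Y n) / A' n := by
      rw [eq_div_iff (hA' n)]; linear_combination -hY n
    linear_combination s * hX n + A n * x * ih₁ - C n * ih₀ - a (n + 2) * hY (n + 2)
      + A n * b (n + 1) * hxY + x * Y (n + 3) * ha n + Y (n + 2) * hab n + Y n * hb n

theorem intervalIntegrable_one_sub_sq_rpow {β : ℝ} (hβ : -1 < β) :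
    IntervalIntegrable (fun x : ℝ ↦ (1 - x ^ 2) ^ β) volume (-1) 1 := by
  have hright : IntervalIntegrable (fun x : ℝ ↦ (1 - x ^ 2) ^ β) volume 0 1 := by
    have h₁ : IntervalIntegrable (fun x : ℝ ↦ (1 - x) ^ β) volume 0 1 := by
      simpa using
        ((intervalIntegral.intervalIntegrable_rpow' hβ (a := 0) (b := 1)).comp_sub_left 1).symm
    have h₂ : ContinuousOn (fun x : ℝ ↦ (1 + x) ^ β) (Set.uIcc 0 1) := by
      intro x hx
      rw [Set.uIcc_of_le zero_le_one] at hx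
      have hx' : 1 + x ≠ 0 := by linarith [hx.1]
      exact ((by fun_prop : ContinuousAt (fun x : ℝ ↦ 1 + x) x).rpow_const
        (Or.inl hx')).continuousWithinAt
    refine (intervalIntegrable_congr fun x hx ↦ ?_).mp (h₁.mul_continuousOn h₂)
    rw [Set.uIoc_of_le zero_le_one] at hx
    rw [← Real.mul_rpow (by linarith [hx.2]) (by linarith [hx.1])]
    ring_nf
  have hleft : IntervalIntegrable (fun x : ℝ ↦ (1 - x ^ 2) ^ β) volume (-1) 0 := by
    simpa using (IntervalIntegrable.iff_comp_neg (by finiteness)).mp hright |>.symm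
  exact hleft.trans hright

theorem integral_rpow_mul_one_sub_rpow {u v : ℝ} (hu : 0 < u) (hv : 0 < v) :
    ∫ x in (0 : ℝ)..1, x ^ (u - 1) * (1 - x) ^ (v - 1) = Gamma u * Gamma v / Gamma (u + v) := by
  have hbeta : Complex.betaIntegral u v =
      ((∫ x in (0 : ℝ)..1, x ^ (u - 1) * (1 - x) ^ (v - 1) : ℝ) : ℂ) := by
    rw [Complex.betaIntegral, ← intervalIntegral.integral_ofReal]
    refine intervalIntegral.integral_congr fun x hx ↦ ?_
    rw [Set.uIcc_of_le zero_le_one] at hx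
    push_cast
    rw [Complex.ofReal_cpow hx.1, Complex.ofReal_cpow (by linarith [hx.2])]
    push_cast
    ring
  have hΓ := Complex.Gamma_mul_Gamma_eq_betaIntegral (s := u) (t := v) (by simpa) (by simpa)
  rw [hbeta, ← Complex.ofReal_add, Complex.Gamma_ofReal, Complex.Gamma_ofReal,
    Complex.Gamma_ofReal] at hΓ
  rw [eq_div_iff (Gamma_pos_of_pos (by positivity)).ne']
  exact_mod_cast (hΓ.trans (mul_comm _ _)).symm

theorem integral_one_sub_sq_rpow_sub_one {β : ℝ} (hβ : 0 < β) :
    ∫ x in (-1 : ℝ)..1, (1 - x ^ 2) ^ (β - 1) =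
      2 ^ (2 * β - 1) * Gamma β ^ 2 / Gamma (2 * β) := by
  have hsub := intervalIntegral.integral_comp_mul_add (a := 0) (b := 1)
    (fun x : ℝ ↦ (1 - x ^ 2) ^ (β - 1)) two_ne_zero (-1)
  norm_num at hsub
  have hsquare : ∀ x ∈ Set.uIcc (0 : ℝ) 1,
      (1 - (2 * x + -1) ^ 2) ^ (β - 1) = 4 ^ (β - 1) * (x ^ (β - 1) * (1 - x) ^ (β - 1)) := by
    intro x hx
    rw [Set.uIcc_of_le zero_le_one] at hx
    rw [← Real.mul_rpow hx.1 (by linarith [hx.2]), ← Real.mul_rpow (by norm_num)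
      (mul_nonneg hx.1 (by linarith [hx.2]))]
    ring_nf
  have hfour : (4 : ℝ) ^ (β - 1) = 2 ^ (2 * β - 1) / 2 := by
    rw [show (4 : ℝ) = 2 ^ (2 : ℝ) by norm_num, ← Real.rpow_mul zero_le_two,
      show 2 * β - 1 = 2 * (β - 1) + 1 by ring, Real.rpow_add two_pos, Real.rpow_one]
    ring
  rw [intervalIntegral.integral_congr hsquare, intervalIntegral.integral_const_mul,
    integral_rpow_mul_one_sub_rpow hβ hβ, hfour, ← two_mul] at hsub
  linear_combination -2 * hsub

theorem integral_sq_mul_one_sub_sq_rpow_sub_one_of_ladder {α c m : ℝ} (hα : 0 < α)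
    {p q : ℝ → ℝ} (hp : ∀ x, HasDerivAt p (c * q x) x) (hq : Differentiable ℝ q)
    (hpq : ∀ x, (1 - x ^ 2) * deriv q x = 2 * (α + 1) * x * q x - 2 * m * p x) :
    2 * m * α * ∫ x in (-1 : ℝ)..1, p x ^ 2 * (1 - x ^ 2) ^ (α - 1) =
      c * (α + 1) * ∫ x in (-1 : ℝ)..1, q x ^ 2 * (1 - x ^ 2) ^ α := by
  have hpc : Continuous p := continuous_iff_continuousAt.2 fun x ↦ (hp x).continuousAt
  have hqc : Continuous q := hq.continuous
  have hw : Continuous fun x : ℝ ↦ (1 - x ^ 2) ^ α :=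
    (by fun_prop : Continuous fun x : ℝ ↦ 1 - x ^ 2).rpow_const fun _ ↦ Or.inr hα.le
  -- `G = 2m x p² w_α + c x q² w_{α+1} + (2α+1) p q w_{α+1}` with `w_β = (1-x²)^β`: the lowering
  -- identity cancels every `q'` term and every cross term `x p q w_α` of `G'`.
  set G : ℝ → ℝ := fun x ↦ (1 - x ^ 2) ^ α *
    (2 * m * x * p x ^ 2 + (1 - x ^ 2) * (c * x * q x ^ 2 + (2 * α + 1) * p x * q x))
  have hG : ∀ x ∈ Set.Ioo (-1 : ℝ) 1, HasDerivAt G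
      (2 * c * (α + 1) * (q x ^ 2 * (1 - x ^ 2) ^ α) -
        4 * m * α * (p x ^ 2 * (1 - x ^ 2) ^ (α - 1))) x := by
    intro x hx
    have hs : 1 - x ^ 2 ≠ 0 := by nlinarith [hx.1, hx.2]
    have hq' : HasDerivAt q (deriv q x) x := (hq x).hasDerivAt
    have hsq := (hasDerivAt_pow 2 x).const_sub 1
    refine ((hsq.rpow_const (p := α) (Or.inl hs)).fun_mul
      ((((hasDerivAt_id' x).const_mul (2 * m)).fun_mul ((hp x).fun_pow 2)).fun_add (hsq.fun_mul
        ((((hasDerivAt_id' x).const_mul c).fun_mul (hq'.fun_pow 2)).fun_add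
          (((hp x).const_mul (2 * α + 1)).fun_mul hq'))))).congr_deriv ?_
    have hpow : (1 - x ^ 2) ^ α = (1 - x ^ 2) ^ (α - 1) * (1 - x ^ 2) := by
      rw [← Real.rpow_add_one hs, sub_add_cancel]
    rw [hpow]
    linear_combination
      (1 - x ^ 2) ^ (α - 1) * (1 - x ^ 2) * (2 * c * x * q x + (2 * α + 1) * p x) * hpq x
  have hGc : ContinuousOn G (Set.Icc (-1) 1) := (hw.mul (by fun_prop)).continuousOn
  have hF : IntervalIntegrable (fun x ↦ q x ^ 2 * (1 - x ^ 2) ^ α) volume (-1) 1 :=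
    ((hqc.pow 2).mul hw).intervalIntegrable _ _
  have hI : IntervalIntegrable (fun x ↦ p x ^ 2 * (1 - x ^ 2) ^ (α - 1)) volume (-1) 1 :=
    (intervalIntegrable_one_sub_sq_rpow (by linarith)).continuousOn_mul (hpc.pow 2).continuousOn
  have hFTC := intervalIntegral.integral_eq_sub_of_hasDerivAt_of_le (by norm_num) hGc hG
    ((hF.const_mul _).sub (hI.const_mul _))
  rw [intervalIntegral.integral_sub (hF.const_mul _) (hI.const_mul _),
    intervalIntegral.integral_const_mul, intervalIntegral.integral_const_mul] at hFTC
  have hG_one : G 1 = 0 := by simp [G, Real.zero_rpow hα.ne']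
  have hG_neg_one : G (-1) = 0 := by simp [G, Real.zero_rpow hα.ne']
  rw [hG_one, hG_neg_one, sub_zero] at hFTC
  linear_combination -hFTC / 2

section Jacobi

variable {α : ℝ}

theorem jacobiP_add_two (hα : 0 ≤ α) (n : ℕ) (x : ℝ) :
    jacobiP α (n + 2) x =
      (2 * n + 2 * α + 3) * (n + α + 2) / ((n + 2) * (n + 2 * α + 2)) *
          (x * jacobiP α (n + 1) x) -
        (n + α + 1) * (n + α + 2) / ((n + 2) * (n + 2 * α + 2)) * jacobiP α n x := by
  rw [jacobiP]
  field_simp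
  ring

theorem differentiable_jacobiP (n : ℕ) : Differentiable ℝ (jacobiP α n) := by
  induction n using Nat.twoStepInduction with
  | zero => exact differentiable_const _
  | one => exact differentiable_id.const_mul _
  | more n h₀ h₁ =>
    rw [funext (jacobiP.eq_3 α · n)]
    fun_prop

theorem jacobiP_add_two_eq_jacobiP_add_one (hα : 0 ≤ α) (n : ℕ) (x : ℝ) :
    jacobiP α (n + 2) x =
      (n + 2 * α + 3) * (n + 2 * α + 4) / ((2 * n + 2 * α + 5) * (2 * n + 2 * α + 6)) *
          jacobiP (α + 1) (n + 2) x -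
        (n + α + 2) / (2 * (2 * n + 2 * α + 5)) * jacobiP (α + 1) n x := by
  have hα₁ : 0 ≤ α + 1 := by positivity
  have := mul_eq_add_of_three_term_recurrences (s := 1) (X := fun n ↦ jacobiP α (n + 2) x)
    (Y := fun n ↦ jacobiP (α + 1) n x)
    (a := fun n : ℕ ↦
      (n + 2 * α + 3) * (n + 2 * α + 4) / ((2 * n + 2 * α + 5) * (2 * n + 2 * α + 6)))
    (b := fun n : ℕ ↦ -((n + α + 2) / (2 * (2 * n + 2 * α + 5))))
    (fun n ↦ jacobiP_add_two hα (n + 2) x) (fun n ↦ jacobiP_add_two hα₁ n x)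
    (fun n ↦ by positivity) (fun n ↦ by push_cast; field_simp; ring)
    (fun n ↦ by push_cast; field_simp; ring) (fun n ↦ by push_cast; field_simp; ring)
    (by simp only [jacobiP]; push_cast; field_simp; ring)
    (by simp only [jacobiP]; push_cast; field_simp; ring) n
  linear_combination this

theorem one_sub_sq_mul_jacobiP_add_one (hα : 0 ≤ α) (n : ℕ) (x : ℝ) :
    (1 - x ^ 2) * jacobiP (α + 1) n x =
      -(4 * (n + 1) * (n + 2) / ((2 * n + 2 * α + 3) * (2 * n + 2 * α + 4))) *
          jacobiP α (n + 2) x +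
        2 * (n + α + 1) / (2 * n + 2 * α + 3) * jacobiP α n x := by
  have hα₁ : 0 ≤ α + 1 := by positivity
  refine mul_eq_add_of_three_term_recurrences (X := fun n ↦ jacobiP (α + 1) n x)
    (Y := fun n ↦ jacobiP α n x)
    (a := fun n : ℕ ↦ -(4 * (n + 1) * (n + 2) / ((2 * n + 2 * α + 3) * (2 * n + 2 * α + 4))))
    (b := fun n : ℕ ↦ 2 * (n + α + 1) / (2 * n + 2 * α + 3))
    (fun n ↦ jacobiP_add_two hα₁ n x) (fun n ↦ jacobiP_add_two hα n x)
    (fun n ↦ by positivity) (fun n ↦ by push_cast; field_simp; ring)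
    (fun n ↦ by push_cast; field_simp; ring) (fun n ↦ by push_cast; field_simp; ring)
    (by simp only [jacobiP]; push_cast; field_simp; ring)
    (by simp only [jacobiP]; push_cast; field_simp; ring) n

theorem hasDerivAt_jacobiP_add_one (hα : 0 ≤ α) (n : ℕ) (x : ℝ) :
    HasDerivAt (jacobiP α (n + 1)) ((n + 2 * α + 2) / 2 * jacobiP (α + 1) n x) x := by
  induction n using Nat.twoStepInduction generalizing x with
  | zero =>
    refine ((hasDerivAt_id' x).const_mul (α + 1)).congr_deriv ?_
    simp only [jacobiP]
    ring
  | one =>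
    rw [funext (jacobiP_add_two hα 0)]
    refine ((((hasDerivAt_id' x).fun_mul ((hasDerivAt_id' x).const_mul (α + 1))).const_mul _
      ).fun_sub ((hasDerivAt_const x 1).const_mul _)).congr_deriv ?_
    simp only [jacobiP]
    push_cast
    field_simp
    ring
  | more n ih₀ ih₁ =>
    have hα₁ : 0 ≤ α + 1 := by positivity
    rw [funext (jacobiP_add_two hα (n + 1))]
    refine ((((hasDerivAt_id' x).fun_mul (ih₁ x)).const_mul _).fun_sub
      ((ih₀ x).const_mul _)).congr_deriv ?_
    linear_combination (norm := skip)
      (2 * n + 2 * α + 5) * (n + α + 3) / ((n + 3) * (n + 2 * α + 3)) *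
          jacobiP_add_two_eq_jacobiP_add_one hα n x -
        (n + 2) * (n + 2 * α + 4) / (2 * (n + 3)) * jacobiP_add_two hα₁ n x
    push_cast
    field_simp
    ring

theorem one_sub_sq_mul_deriv_jacobiP (hα : 0 ≤ α) (n : ℕ) (x : ℝ) :
    (1 - x ^ 2) * deriv (jacobiP (α + 1) n) x =
      2 * (α + 1) * x * jacobiP (α + 1) n x - 2 * (n + 1) * jacobiP α (n + 1) x := by
  have hα₁ : 0 ≤ α + 1 := by positivity
  cases n with
  | zero =>
    rw [show jacobiP (α + 1) 0 = fun _ ↦ 1 from rfl, deriv_const]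
    norm_num [jacobiP]
    ring
  | succ n =>
    rw [(hasDerivAt_jacobiP_add_one hα₁ n x).deriv]
    linear_combination (norm := skip)
      (n + 2 * (α + 1) + 2) / 2 * one_sub_sq_mul_jacobiP_add_one hα₁ n x +
        2 * (n + 2) * jacobiP_add_two_eq_jacobiP_add_one hα n x +
        2 * (α + 1) * (n + 2) * (n + 2 * α + 4) / ((2 * n + 2 * α + 5) * (n + α + 3)) *
          jacobiP_add_two hα₁ n x
    push_cast
    field_simp
    ring

theorem jacobiH_pos (hα : 0 ≤ α) (n : ℕ) : 0 < jacobiH α n := by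
  unfold jacobiH
  positivity

theorem jacobiH_zero (hα : 0 < α) :
    (α + 1 / 2) * jacobiH α 0 = α * (2 ^ (2 * α - 1) * Gamma α ^ 2 / Gamma (2 * α)) := by
  have hpow : (2 : ℝ) ^ (2 * α + 1) = 2 ^ (2 * α - 1) * 4 := by
    rw [show 2 * α + 1 = 2 * α - 1 + 2 by ring, Real.rpow_add two_pos]
    norm_num
  simp only [jacobiH, Nat.cast_zero, zero_add, mul_zero, Nat.factorial_zero, Nat.cast_one, one_mul]
  rw [hpow, Real.Gamma_add_one hα.ne', Real.Gamma_add_one (by positivity)]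
  field_simp
  ring

theorem jacobiH_succ (hα : 0 ≤ α) (n : ℕ) :
    4 * (n + 1) * jacobiH α (n + 1) = (n + 2 * α + 2) * jacobiH (α + 1) n := by
  have hpow : (2 : ℝ) ^ (2 * (α + 1) + 1) = 2 ^ (2 * α + 1) * 4 := by
    rw [show 2 * (α + 1) + 1 = 2 * α + 1 + 2 by ring, Real.rpow_add two_pos]
    norm_num
  have hΓ : Gamma (n + 2 * (α + 1) + 1) = (n + 2 * α + 2) * Gamma (n + 2 * α + 2) := by
    rw [show (n : ℝ) + 2 * (α + 1) + 1 = n + 2 * α + 2 + 1 by ring,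
      Real.Gamma_add_one (by positivity)]
  simp only [jacobiH, hpow, hΓ, Nat.factorial_succ]
  push_cast
  rw [show (n : ℝ) + 1 + α + 1 = n + (α + 1) + 1 by ring,
    show (n : ℝ) + 1 + 2 * α + 1 = n + 2 * α + 2 by ring]
  field_simp
  ring

theorem integral_sq_jacobiP_mul_one_sub_sq_rpow_sub_one (n : ℕ) (hα : 0 < α) :
    α * ∫ x in (-1 : ℝ)..1, jacobiP α n x ^ 2 * (1 - x ^ 2) ^ (α - 1) =
      (n + α + 1 / 2) * jacobiH α n := by
  induction n generalizing α with
  | zero =>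
    simp only [jacobiP, one_pow, one_mul, Nat.cast_zero, zero_add]
    rw [integral_one_sub_sq_rpow_sub_one hα]
    exact (jacobiH_zero hα).symm
  | succ n ih =>
    have hladder := integral_sq_mul_one_sub_sq_rpow_sub_one_of_ladder hα (m := n + 1)
      (hasDerivAt_jacobiP_add_one hα.le n) (differentiable_jacobiP n)
      (one_sub_sq_mul_deriv_jacobiP hα.le n)
    have ih' := ih (by linarith : 0 < α + 1)
    rw [add_sub_cancel_right] at ih'
    push_cast
    apply mul_left_cancel₀ (show (4 * (n + 1) : ℝ) ≠ 0 by positivity)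
    linear_combination
      2 * hladder + (n + 2 * α + 2) * ih' - (n + α + 3 / 2) * jacobiH_succ hα.le n

end Jacobi

theorem weighted_norm_normJacobiP (α : ℝ) (hα : 0 < α) (n : ℕ) :
    α * ∫ x in (-1 : ℝ)..1, (normJacobiP α n x) ^ 2 * (1 - x ^ 2) ^ (α - 1) =
      (n : ℝ) + α + 1 / 2 := by
  have hpos := jacobiH_pos hα.le n
  simp_rw [normJacobiP, div_pow, Real.sq_sqrt hpos.le, div_mul_eq_mul_div,
    intervalIntegral.integral_div, mul_div_assoc',
    integral_sq_jacobiP_mul_one_sub_sq_rpow_sub_one n hα]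
  field_simp
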